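/- Let g = 01/2/031/3, h = 01/12/20/3, and w = h(g^ω(0)). Then every factor of w of length at least 3 parses uniquely into the code words 01, 12, 20, 3 of h; equivalently, h restricted to factors of g^ω(0) of length at least 2 yields factors of w with a unique h-preimage decomposition. -/

import Mathlib

/-!
The code words `01, 12, 20, 3` of `h` begin with distinct letters, so a parse is determined by
whether it starts on a block boundary or one letter later. The two cannot both be consistent with
`g^ω(0)`, which has only ten factors of length two: if `u` begins with `a + 1` (mod 3), reading
from the boundary forces the preimage factor `a + 1, a`, reading from the next letter forces
`a, a + 2`, and no `a` admits both. For existence, `u` lies inside `h(g^n(0))` for large `n`,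
and any window of a concatenation of blocks is a proper tail of a block, whole blocks and a
proper head of a block.
-/

def IsFactorOf {α : Type*} (u : List α) (w : ℕ → α) : Prop :=
  ∃ i : ℕ, u = (List.range u.length).map fun k => w (i + k)

/-- The morphism g = 01/2/031/3. -/
def g : ℕ → List ℕ
  | 0 => [0, 1]
  | 1 => [2]
  | 2 => [0, 3, 1]
  | _ => [3]

def IsPrefixOf (l : List ℕ) (w : ℕ → ℕ) : Prop :=
  ∀ i, i < l.length → l[i]? = some (w i)

/-- w is the infinite fixed point g^ω(0): every iterate g^n(0) is a prefix of w. -/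
def IsFixedPointG (w : ℕ → ℕ) : Prop :=
  ∀ n : ℕ, IsPrefixOf ((fun l => l.flatMap g)^[n] [0]) w

/-- The morphism h = 01/12/20/3. -/
def hm : ℕ → List ℕ
  | 0 => [0, 1]
  | 1 => [1, 2]
  | 2 => [2, 0]
  | _ => [3]

/-- v is the infinite word h(g^ω(0)): the h-image of every iterate g^n(0) is a prefix of v. -/
def IsHImageOfG (v : ℕ → ℕ) : Prop :=
  ∀ n : ℕ, IsPrefixOf (((fun l => l.flatMap g)^[n] [0]).flatMap hm) v

section Factors

variable {α : Type*} {w : ℕ → α} {u : List α}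

lemma IsFactorOf.exists_getElem_eq (h : IsFactorOf u w) :
    ∃ i, ∀ j (hj : j < u.length), u[j] = w (i + j) := by
  obtain ⟨i, hu⟩ := h
  refine ⟨i, fun j hj => ?_⟩
  have : u[j]? = some (w (i + j)) := by rw [hu]; simp [hj]
  simpa [hj] using this

lemma IsFactorOf.forall_mem {P : α → Prop} (hP : ∀ i, P (w i)) (h : IsFactorOf u w) :
    ∀ x ∈ u, P x := by
  obtain ⟨i, hi⟩ := h.exists_getElem_eq
  intro x hx
  obtain ⟨j, hj, rfl⟩ := List.mem_iff_getElem.mp hx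
  rw [hi j hj]
  exact hP _

lemma IsFactorOf.rel_of_cons_cons {R : α → α → Prop} (hR : ∀ i, R (w i) (w (i + 1)))
    {x y : α} {r : List α} (h : IsFactorOf (x :: y :: r) w) : R x y := by
  obtain ⟨i, hi⟩ := h.exists_getElem_eq
  have hx : x = w i := hi 0 (by simp)
  have hy : y = w (i + 1) := hi 1 (by simp)
  exact hx ▸ hy ▸ hR i

end Factors

section Prefixes

variable {l : List ℕ} {w : ℕ → ℕ}

lemma IsPrefixOf.getElem_eq (h : IsPrefixOf l w) {i : ℕ} (hi : i < l.length) : l[i] = w i := by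
  simpa [hi] using h i hi

lemma IsPrefixOf.take_drop_eq_map (h : IsPrefixOf l w) {i k : ℕ} (hik : i + k ≤ l.length) :
    (l.drop i).take k = (List.range k).map fun j => w (i + j) := by
  apply List.ext_getElem
  · simp; omega
  · intro j _ hj
    simp only [List.length_map, List.length_range] at hj
    simp [h.getElem_eq (show i + j < l.length by omega)]

lemma IsPrefixOf.isFactorOf_of_infix (h : IsPrefixOf l w) {q : List ℕ} (hq : q <:+: l) :
    IsFactorOf q w := by
  obtain ⟨s, t, rfl⟩ := hq
  refine ⟨s.length, ?_⟩
  have := h.take_drop_eq_map (i := s.length) (k := q.length) (by simp)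
  rwa [List.append_assoc, List.drop_left, List.take_left] at this

end Prefixes

section FlatMap

variable {α β : Type*} {f : α → List β}

lemma List.length_le_length_flatMap (hf : ∀ a, f a ≠ []) (l : List α) :
    l.length ≤ (l.flatMap f).length := by
  rw [List.length_flatMap, ← List.length_map (f := fun a => (f a).length)]
  refine List.length_le_sum_of_one_le _ fun n hn => ?_
  obtain ⟨a, -, rfl⟩ := List.mem_map.mp hn
  exact List.length_pos_iff.mpr (hf a)

lemma List.IsChain.flatMap {R : α → α → Prop} {S : β → β → Prop} (hf : ∀ a, f a ≠ [])
    (hS : ∀ a, (f a).IsChain S)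
    (hRS : ∀ a b, R a b → ∀ x ∈ (f a).getLast?, ∀ y ∈ (f b).head?, S x y) :
    ∀ {l : List α}, l.IsChain R → (l.flatMap f).IsChain S
  | [], _ => by simp
  | [a], _ => by simpa using hS a
  | a :: b :: l, h => by
    rw [List.flatMap_cons]
    refine (hS a).append (h.tail.flatMap hf hS hRS) fun x hx y hy => hRS a b h.rel x hx y ?_
    simpa [List.head?_append, List.head?_eq_none_iff.not.mpr (hf b)] using hy

end FlatMap

/-- The ten factors of length two of `g^ω(0)`. -/
abbrev Admissible (x y : ℕ) : Prop :=
  (x, y) ∈ [(0, 1), (1, 2), (2, 0), (0, 3), (3, 1), (1, 0), (1, 3), (3, 2), (2, 3), (3, 0)]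

lemma g_ne_nil (a : ℕ) : g a ≠ [] := by
  rcases a with _ | _ | _ | a <;> simp [g]

lemma le_three_of_mem_g {a x : ℕ} (hx : x ∈ g a) : x ≤ 3 := by
  rcases a with _ | _ | _ | a <;> simp [g] at hx <;> omega

lemma isChain_g (a : ℕ) : (g a).IsChain Admissible := by
  rcases a with _ | _ | _ | a <;> simp [g]

lemma Admissible.g_getLast_head {a b : ℕ} (h : Admissible a b) :
    ∀ x ∈ (g a).getLast?, ∀ y ∈ (g b).head?, Admissible x y := by
  obtain ⟨ha, hb⟩ : a ≤ 3 ∧ b ≤ 3 := by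
    simp only [Admissible, List.mem_cons, Prod.mk.injEq, List.not_mem_nil, or_false] at h
    omega
  interval_cases a <;> interval_cases b <;> simp_all [g]

def gIter (n : ℕ) : List ℕ := (fun l => l.flatMap g)^[n] [0]

lemma gIter_succ (n : ℕ) : gIter (n + 1) = (gIter n).flatMap g :=
  Function.iterate_succ_apply' _ _ _

lemma le_three_of_mem_gIter {n x : ℕ} (hx : x ∈ gIter n) : x ≤ 3 := by
  cases n with
  | zero => simp_all [gIter]
  | succ n =>
    obtain ⟨a, -, hxa⟩ := List.mem_flatMap.mp (gIter_succ n ▸ hx)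
    exact le_three_of_mem_g hxa

lemma isChain_gIter (n : ℕ) : (gIter n).IsChain Admissible := by
  induction n with
  | zero => simp [gIter]
  | succ n ih =>
    rw [gIter_succ]
    exact ih.flatMap g_ne_nil isChain_g fun _ _ h => h.g_getLast_head

lemma gIter_eq_cons (n : ℕ) : ∃ r, gIter n = 0 :: r := by
  induction n with
  | zero => exact ⟨[], rfl⟩
  | succ n ih =>
    obtain ⟨r, hr⟩ := ih
    exact ⟨1 :: r.flatMap g, by rw [gIter_succ, hr]; rfl⟩

lemma lt_length_gIter (n : ℕ) : n < (gIter n).length := by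
  induction n with
  | zero => simp [gIter]
  | succ n ih =>
    obtain ⟨r, hr⟩ := gIter_eq_cons n
    have hlen : r.length ≤ (r.flatMap g).length := r.length_le_length_flatMap g_ne_nil
    rw [hr, List.length_cons] at ih
    rw [gIter_succ, hr, List.flatMap_cons, List.length_append]
    simp only [g, List.length_cons, List.length_nil]
    omega

namespace IsFixedPointG

variable {w : ℕ → ℕ}

lemma isPrefixOf_gIter (hw : IsFixedPointG w) (n : ℕ) : IsPrefixOf (gIter n) w := hw n

lemma apply_le_three (hw : IsFixedPointG w) (i : ℕ) : w i ≤ 3 := by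
  have hi := lt_length_gIter i
  rw [← (hw.isPrefixOf_gIter i).getElem_eq hi]
  exact le_three_of_mem_gIter (List.getElem_mem hi)

lemma admissible_apply_succ (hw : IsFixedPointG w) (i : ℕ) : Admissible (w i) (w (i + 1)) := by
  have hi := lt_length_gIter (i + 1)
  rw [← (hw.isPrefixOf_gIter (i + 1)).getElem_eq hi,
    ← (hw.isPrefixOf_gIter (i + 1)).getElem_eq (by omega)]
  exact List.isChain_iff_getElem.mp (isChain_gIter (i + 1)) i hi

end IsFixedPointG

section Windows

variable {α β : Type*} (f : α → List β) {a₀ : α}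

lemma exists_drop_flatMap_eq (ha₀ : f a₀ ≠ []) (l : List α) (i : ℕ) :
    ∃ s a t, (l.flatMap f).drop i = s ++ t.flatMap f ∧ s <:+ f a ∧ s ≠ f a ∧
      (if s = [] then [] else [a]) ++ t <:+ l := by
  induction l generalizing i with
  | nil => exact ⟨[], a₀, [], by simp, List.nil_suffix, ha₀.symm, by simp⟩
  | cons c t ih =>
    rcases Nat.eq_zero_or_pos i with rfl | hi
    · exact ⟨[], a₀, c :: t, by simp, List.nil_suffix, ha₀.symm, by simp⟩
    by_cases hic : i < (f c).length
    · have hne : (f c).drop i ≠ [] := by simpa using hic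
      have hproper : (f c).drop i ≠ f c := fun h => by
        have := congrArg List.length h
        simp only [List.length_drop] at this
        omega
      refine ⟨(f c).drop i, c, t, ?_, List.drop_suffix _ _, hproper, by simp [hne]⟩
      rw [List.flatMap_cons, List.drop_append_of_le_length hic.le]
    · obtain ⟨s, a, t', hdrop, hsa, hsna, hsuf⟩ := ih (i - (f c).length)
      refine ⟨s, a, t', ?_, hsa, hsna, hsuf.trans (List.suffix_cons c t)⟩
      rw [List.flatMap_cons, List.drop_append, List.drop_eq_nil_of_le (by omega),
        List.nil_append, hdrop]

lemma exists_take_flatMap_eq (ha₀ : f a₀ ≠ []) (l : List α) (k : ℕ) :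
    ∃ m p b, (l.flatMap f).take k = m.flatMap f ++ p ∧ p <+: f b ∧ p ≠ f b ∧
      m ++ (if p = [] then [] else [b]) <+: l := by
  induction l generalizing k with
  | nil => exact ⟨[], [], a₀, by simp, List.nil_prefix, ha₀.symm, by simp⟩
  | cons c t ih =>
    by_cases hkc : k < (f c).length
    · have hproper : (f c).take k ≠ f c := fun h => by
        have := congrArg List.length h
        simp only [List.length_take] at this
        omega
      refine ⟨[], (f c).take k, c, ?_, List.take_prefix _ _, hproper, ?_⟩
      · rw [List.flatMap_cons, List.take_append_of_le_length hkc.le, List.flatMap_nil,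
          List.nil_append]
      · split <;> simp
    · obtain ⟨m, p, b, htake, hpb, hpnb, hpre⟩ := ih (k - (f c).length)
      refine ⟨c :: m, p, b, ?_, hpb, hpnb, List.cons_prefix_cons.mpr ⟨rfl, hpre⟩⟩
      rw [List.flatMap_cons, List.take_append, List.take_of_length_le (by omega), htake,
        List.flatMap_cons, List.append_assoc]

lemma exists_take_drop_flatMap_eq (ha₀ : f a₀ ≠ []) (l : List α) {k : ℕ}
    (hk : ∀ a, (f a).length ≤ k + 1) (i : ℕ) :
    ∃ s m p a b, ((l.flatMap f).drop i).take k = s ++ m.flatMap f ++ p ∧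
      s <:+ f a ∧ s ≠ f a ∧ p <+: f b ∧ p ≠ f b ∧
      (if s = [] then [] else [a]) ++ m ++ (if p = [] then [] else [b]) <:+: l := by
  obtain ⟨s, a, t, hdrop, hsa, hsna, hsuf⟩ := exists_drop_flatMap_eq f ha₀ l i
  have hs : s.length ≤ k := by
    have hne : s.length ≠ (f a).length := fun h => hsna (hsa.eq_of_length h)
    have := hsa.length_le
    have := hk a
    omega
  obtain ⟨m, p, b, htake, hpb, hpnb, hpre⟩ := exists_take_flatMap_eq f ha₀ t (k - s.length)
  refine ⟨s, m, p, a, b, ?_, hsa, hsna, hpb, hpnb, ?_⟩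
  · rw [hdrop, List.take_append, List.take_of_length_le hs, htake, List.append_assoc]
  · rw [List.append_assoc]
    exact ((List.prefix_append_right_inj _).mpr hpre).isInfix.trans hsuf.isInfix

end Windows

def IsParse {α β : Type*} (f : α → List β) (w : ℕ → α) (u : List β)
    (smp : List β × List α × List β) : Prop :=
  ∃ a b : α, smp.1 <:+ f a ∧ smp.1 ≠ f a ∧ smp.2.2 <+: f b ∧ smp.2.2 ≠ f b ∧
    u = smp.1 ++ smp.2.1.flatMap f ++ smp.2.2 ∧
    IsFactorOf ((if smp.1 = [] then [] else [a]) ++ smp.2.1 ++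
      (if smp.2.2 = [] then [] else [b])) w

lemma hm_ne_nil (a : ℕ) : hm a ≠ [] := by
  rcases a with _ | _ | _ | a <;> simp [hm]

lemma length_hm_le (a : ℕ) : (hm a).length ≤ 2 := by
  rcases a with _ | _ | _ | a <;> simp [hm]

lemma exists_isParse_hm {w v : ℕ → ℕ} (hw : IsFixedPointG w) (hv : IsHImageOfG v)
    {u : List ℕ} (hu : u ≠ []) (huv : IsFactorOf u v) : ∃ smp, IsParse hm w u smp := by
  obtain ⟨i, hui⟩ := huv
  set l := gIter (i + u.length)
  have hlen : i + u.length ≤ (l.flatMap hm).length :=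
    (lt_length_gIter _).le.trans (l.length_le_length_flatMap hm_ne_nil)
  have hwindow : ((l.flatMap hm).drop i).take u.length = u :=
    ((hv (i + u.length) : IsPrefixOf (l.flatMap hm) v).take_drop_eq_map hlen).trans hui.symm
  have hk : ∀ a, (hm a).length ≤ u.length + 1 := fun a => by
    have := length_hm_le a
    have := List.length_pos_iff.mpr hu
    omega
  obtain ⟨s, m, p, a, b, hsmp, hsa, hsna, hpb, hpnb, hinf⟩ :=
    exists_take_drop_flatMap_eq hm (hm_ne_nil 0) l hk i
  exact ⟨(s, m, p), a, b, hsa, hsna, hpb, hpnb, hwindow ▸ hsmp,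
    (hw.isPrefixOf_gIter (i + u.length)).isFactorOf_of_infix hinf⟩

lemma hm_of_le_two {a : ℕ} (ha : a ≤ 2) : hm a = [a, (a + 1) % 3] := by
  interval_cases a <;> rfl

lemma hm_of_three_le {a : ℕ} (ha : 3 ≤ a) : hm a = [3] := by
  obtain ⟨n, rfl⟩ := Nat.exists_eq_add_of_le' ha
  rfl

lemma hm_eq_cons {a : ℕ} (ha : a ≤ 3) : ∃ r, hm a = a :: r := by
  interval_cases a <;> exact ⟨_, rfl⟩

lemma eq_nil_or_of_isSuffix_hm {s : List ℕ} {a : ℕ} (h : s <:+ hm a) (hne : s ≠ hm a) :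
    s = [] ∨ a ≤ 2 ∧ s = [(a + 1) % 3] := by
  rcases le_or_gt a 2 with ha | ha
  · rw [hm_of_le_two ha] at h hne
    simp only [List.suffix_cons_iff, List.suffix_nil] at h
    tauto
  · rw [hm_of_three_le ha] at h hne
    simp only [List.suffix_cons_iff, List.suffix_nil] at h
    tauto

lemma eq_nil_or_of_isPrefix_hm {p : List ℕ} {b : ℕ} (h : p <+: hm b) (hne : p ≠ hm b) :
    p = [] ∨ b ≤ 2 ∧ p = [b] := by
  rcases le_or_gt b 2 with hb | hb
  · rw [hm_of_le_two hb] at h hne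
    simp only [List.prefix_cons_iff, List.prefix_nil] at h
    aesop
  · rw [hm_of_three_le hb] at h hne
    simp only [List.prefix_cons_iff, List.prefix_nil] at h
    aesop

lemma eq_of_hm_append_eq_cons {c x : ℕ} {q r : List ℕ} (hc : c ≤ 3) (hx : x ≤ 2)
    (h : hm c ++ q = x :: r) : c = x ∧ r = (x + 1) % 3 :: q := by
  obtain ⟨r₀, hr₀⟩ := hm_eq_cons hc
  obtain ⟨rfl, -⟩ : c = x ∧ _ := by simpa [hr₀] using h
  simpa [hm_of_le_two hx, eq_comm] using h

lemma head?_flatMap_hm_append {m p : List ℕ} {b : ℕ} (hle : ∀ c ∈ m, c ≤ 3)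
    (hp : p = [] ∨ b ≤ 2 ∧ p = [b]) :
    (m.flatMap hm ++ p).head? = (m ++ if p = [] then [] else [b]).head? := by
  rcases m with _ | ⟨c, m⟩
  · rcases hp with rfl | ⟨-, rfl⟩ <;> simp
  · obtain ⟨r, hr⟩ := hm_eq_cons (hle c (by simp))
    simp [hr]

lemma flatMap_hm_cons_append_ne {d b : ℕ} {p : List ℕ}
    (hp : p = [] ∨ b ≤ 2 ∧ p = [b]) (t q : List ℕ) : (d :: t).flatMap hm ++ q ≠ p := by
  rcases hp with rfl | ⟨hb, rfl⟩
  · simp [hm_ne_nil]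
  · rcases le_or_gt d 2 with hd2 | hd2
    · simp [hm_of_le_two hd2]
    · simp only [List.flatMap_cons, hm_of_three_le hd2, List.cons_append, ne_eq,
        List.cons.injEq, not_and]
      omega

lemma eq_of_flatMap_hm_append_eq {m m' p p' : List ℕ} {b b' : ℕ}
    (hle : ∀ c ∈ m, c ≤ 3) (hle' : ∀ c ∈ m', c ≤ 3)
    (hp : p = [] ∨ b ≤ 2 ∧ p = [b]) (hp' : p' = [] ∨ b' ≤ 2 ∧ p' = [b'])
    (h : m.flatMap hm ++ p = m'.flatMap hm ++ p') : m = m' ∧ p = p' := by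
  induction m generalizing m' with
  | nil =>
    rcases m' with _ | ⟨d, t'⟩
    · simpa using h
    · exact (flatMap_hm_cons_append_ne hp t' p' h.symm).elim
  | cons c t ih =>
    rcases m' with _ | ⟨d, t'⟩
    · exact (flatMap_hm_cons_append_ne hp' t p h).elim
    obtain ⟨r, hr⟩ := hm_eq_cons (hle c (by simp))
    obtain ⟨r', hr'⟩ := hm_eq_cons (hle' d (by simp))
    obtain rfl : c = d := by simpa [hr, hr'] using congrArg List.head? h
    simp only [List.flatMap_cons, List.append_assoc, List.append_cancel_left_eq] at h
    obtain ⟨rfl, rfl⟩ :=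
      ih (fun x hx => hle x (by simp [hx])) (fun x hx => hle' x (by simp [hx])) h
    exact ⟨rfl, rfl⟩

namespace IsParse

variable {w : ℕ → ℕ} {u : List ℕ}

lemma not_nil_of_singleton (hw : IsFixedPointG w) (hu : 3 ≤ u.length) {m p m' p' : List ℕ}
    {x : ℕ} (h : IsParse hm w u ([], m, p)) (h' : IsParse hm w u ([x], m', p')) : False := by
  dsimp only [IsParse] at h h'
  obtain ⟨a₁, b, -, -, hpb, hpnb, hu₁, hf⟩ := h
  obtain ⟨a, b', hsa, hsna, hpb', hpnb', hu₂, hf'⟩ := h'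
  simp only [List.nil_append, if_pos] at hu₁ hf
  simp only [List.cons_ne_nil, if_false, List.cons_append, List.nil_append] at hu₂ hf'
  obtain ⟨ha, rfl⟩ : a ≤ 2 ∧ x = (a + 1) % 3 := by
    simpa using eq_nil_or_of_isSuffix_hm hsa hsna
  have hp := eq_nil_or_of_isPrefix_hm hpb hpnb
  have hp' := eq_nil_or_of_isPrefix_hm hpb' hpnb'
  obtain ⟨c, t, rfl⟩ : ∃ c t, m = c :: t := by
    refine List.exists_cons_of_ne_nil fun hm0 => ?_
    rcases hp with rfl | ⟨-, rfl⟩ <;> simp [hu₁, hm0] at hu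
  obtain ⟨d, t', rfl⟩ : ∃ d t', m' = d :: t' := by
    refine List.exists_cons_of_ne_nil fun hm0 => ?_
    rcases hp' with rfl | ⟨-, rfl⟩ <;> simp [hu₂, hm0] at hu
  have hle := hf.forall_mem (P := (· ≤ 3)) hw.apply_le_three
  have hle' := hf'.forall_mem (P := (· ≤ 3)) hw.apply_le_three
  simp only [List.flatMap_cons, List.append_assoc] at hu₁ hu₂
  obtain ⟨rfl, hd⟩ :=
    eq_of_hm_append_eq_cons (hle c (by simp)) (by omega) (hu₁.symm.trans hu₂)
  obtain ⟨rfl, ht⟩ := eq_of_hm_append_eq_cons (hle' d (by simp)) (by omega) hd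
  have hhead : (t ++ if p = [] then [] else [b]).head? = some a := by
    rw [← head?_flatMap_hm_append (fun y hy => hle y (by simp [hy])) hp, ht]
    simp only [List.head?_cons, Option.some.injEq]
    omega
  obtain ⟨r, hr⟩ := List.head?_eq_some_iff.mp hhead
  rw [List.cons_append, hr] at hf
  have h₁ := hf.rel_of_cons_cons hw.admissible_apply_succ
  have h₂ := hf'.rel_of_cons_cons hw.admissible_apply_succ
  interval_cases a <;> simp_all

lemma fst_eq (hw : IsFixedPointG w) (hu : 3 ≤ u.length) {s m p s' m' p' : List ℕ}
    (h : IsParse hm w u (s, m, p)) (h' : IsParse hm w u (s', m', p')) : s = s' := by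
  have shape : ∀ {s m p}, IsParse hm w u (s, m, p) → s = [] ∨ ∃ x, s = [x] :=
    fun ⟨_, _, hsa, hsna, _⟩ => (eq_nil_or_of_isSuffix_hm hsa hsna).imp_right fun h => ⟨_, h.2⟩
  rcases shape h with rfl | ⟨x, rfl⟩ <;> rcases shape h' with rfl | ⟨x', rfl⟩
  · rfl
  · exact (h.not_nil_of_singleton hw hu h').elim
  · exact (h'.not_nil_of_singleton hw hu h).elim
  · obtain ⟨_, _, _, _, _, _, hu₁, _⟩ := h
    obtain ⟨_, _, _, _, _, _, hu₂, _⟩ := h'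
    obtain ⟨rfl, -⟩ : x = x' ∧ _ := by simpa using hu₁.symm.trans hu₂
    rfl

lemma snd_eq (hw : IsFixedPointG w) {s m p m' p' : List ℕ}
    (h : IsParse hm w u (s, m, p)) (h' : IsParse hm w u (s, m', p')) : m = m' ∧ p = p' := by
  dsimp only [IsParse] at h h'
  obtain ⟨a, b, -, -, hpb, hpnb, hu₁, hf⟩ := h
  obtain ⟨a', b', -, -, hpb', hpnb', hu₂, hf'⟩ := h'
  have hle := hf.forall_mem (P := (· ≤ 3)) hw.apply_le_three
  have hle' := hf'.forall_mem (P := (· ≤ 3)) hw.apply_le_three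
  refine eq_of_flatMap_hm_append_eq (fun c hc => hle c (by simp [hc]))
    (fun c hc => hle' c (by simp [hc])) (eq_nil_or_of_isPrefix_hm hpb hpnb)
    (eq_nil_or_of_isPrefix_hm hpb' hpnb') ?_
  simpa [List.append_assoc] using hu₁.symm.trans hu₂

lemma eq (hw : IsFixedPointG w) (hu : 3 ≤ u.length) {smp smp' : List ℕ × List ℕ × List ℕ}
    (h : IsParse hm w u smp) (h' : IsParse hm w u smp') : smp = smp' := by
  obtain ⟨s, m, p⟩ := smp
  obtain ⟨s', m', p'⟩ := smp'
  obtain rfl := h.fst_eq hw hu h'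
  obtain ⟨rfl, rfl⟩ := h.snd_eq hw h'
  rfl

end IsParse

/-- Every factor of h(g^ω(0)) of length at least 3 parses uniquely into the code
words of h: there is a unique decomposition into a proper suffix of a block,
complete blocks, and a proper prefix of a block, consistent with an occurrence
(i.e. whose preimage is a factor of g^ω(0)). -/
theorem unique_parsing (w v : ℕ → ℕ) (hw : IsFixedPointG w) (hv : IsHImageOfG v) :
    ∀ u : List ℕ, 3 ≤ u.length → IsFactorOf u v →
    ∃! smp : List ℕ × List ℕ × List ℕ,
      ∃ a b : ℕ,
        smp.1 <:+ hm a ∧ smp.1 ≠ hm a ∧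
        smp.2.2 <+: hm b ∧ smp.2.2 ≠ hm b ∧
        u = smp.1 ++ smp.2.1.flatMap hm ++ smp.2.2 ∧
        IsFactorOf ((if smp.1 = [] then [] else [a]) ++ smp.2.1 ++
          (if smp.2.2 = [] then [] else [b])) w := by
  intro u hu huv
  obtain ⟨smp, h⟩ := exists_isParse_hm hw hv (List.ne_nil_of_length_pos (by omega)) huv
  exact ⟨smp, h, fun smp' h' => IsParse.eq hw hu h' h⟩
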